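/- Let P : C^op → InfSL be a variational doctrine (elementary, with comprehensive diagonals and full weak comprehension). Then the elementary quotient completion Q(P) : Q_P^op → InfSL has full strong comprehension: for α ∈ Q(P)(A,ρ) ⊆ P(A) with weak comprehension arrow {α} : X → A in C, the arrow [{α}] : (X, P({α}×{α})(ρ)) → (A,ρ) is a strong (monic) comprehension arrow of α in Q(P). -/

import Mathlib

open CategoryTheory CategoryTheory.Limits Opposite

noncomputable section

universe w v u

namespace DoctrinePaper

variable {C : Type u} [Category.{v} C] [HasFiniteProducts C]

/-- The fiber of a primary doctrine `P : Cᵒᵖ ⥤ SemilatInfCat` over an object `A`. -/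
abbrev Fib (P : Cᵒᵖ ⥤ SemilatInfCat.{w}) (A : C) : Type w :=
  ↥(P.obj (op A))

/-- Reindexing along an arrow `f : A ⟶ B`. -/
def rmap (P : Cᵒᵖ ⥤ SemilatInfCat.{w}) {A B : C} (f : A ⟶ B) :
    Fib P B → Fib P A :=
  fun x => (P.map f.op) x

variable (P : Cᵒᵖ ⥤ SemilatInfCat.{w})

/-- An elementary doctrine: fibered equalities `δ A ∈ P (A ⨯ A)` such that
`E_e(α) = P⟨pr1,pr2⟩(α) ⊓ P⟨pr2,pr3⟩(δ A)` is left adjoint to reindexing along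
`e = ⟨pr1,pr2,pr2⟩ : X ⨯ A ⟶ (X ⨯ A) ⨯ A`. -/
structure IsElementary where
  δ : ∀ A : C, Fib P (A ⨯ A)
  adj :
    ∀ (X A : C) (α : Fib P (X ⨯ A)) (β : Fib P ((X ⨯ A) ⨯ A)),
      (rmap P (prod.fst : (X ⨯ A) ⨯ A ⟶ X ⨯ A) α ⊓
          rmap P (prod.lift (prod.fst ≫ prod.snd) prod.snd : (X ⨯ A) ⨯ A ⟶ A ⨯ A) (δ A) ≤ β)
        ↔ α ≤ rmap P (prod.lift (𝟙 (X ⨯ A)) prod.snd : X ⨯ A ⟶ (X ⨯ A) ⨯ A) β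

/-- A `P`-equivalence relation over `A`. -/
structure IsEqRel (hE : IsElementary P) {A : C} (ρ : Fib P (A ⨯ A)) : Prop where
  refl : hE.δ A ≤ ρ
  symm : ρ = rmap P (prod.lift prod.snd prod.fst : A ⨯ A ⟶ A ⨯ A) ρ
  trans :
    rmap P (prod.fst : (A ⨯ A) ⨯ A ⟶ A ⨯ A) ρ ⊓
        rmap P (prod.lift (prod.fst ≫ prod.snd) prod.snd : (A ⨯ A) ⨯ A ⟶ A ⨯ A) ρ ≤
      rmap P (prod.lift (prod.fst ≫ prod.fst) prod.snd : (A ⨯ A) ⨯ A ⟶ A ⨯ A) ρ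

/-- An elementary existential doctrine, together with the induced left adjoints
`∃_f` along all arrows, satisfying the adjunction law, Frobenius reciprocity, and
the Beck–Chevalley condition along pullbacks of projections. -/
structure IsExistential extends IsElementary P where
  E : ∀ {A B : C}, (A ⟶ B) → Fib P A → Fib P B
  adjE : ∀ {A B : C} (f : A ⟶ B) (α : Fib P A) (β : Fib P B),
    E f α ≤ β ↔ α ≤ rmap P f β
  frobenius : ∀ {A B : C} (f : A ⟶ B) (α : Fib P A) (β : Fib P B),
    E f (α ⊓ rmap P f β) = E f α ⊓ β
  beckChevalley : ∀ {B A A' : C} (f : A' ⟶ A) (β : Fib P (B ⨯ A)),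
    E (prod.snd : B ⨯ A' ⟶ A') (rmap P (prod.map (𝟙 B) f) β) =
      rmap P f (E (prod.snd : B ⨯ A ⟶ A) β)

/-- Descent data for a relation `ρ` over `A`. -/
def Des {A : C} (ρ : Fib P (A ⨯ A)) : Set (Fib P A) :=
  {α | rmap P (prod.fst : A ⨯ A ⟶ A) α ⊓ ρ ≤ rmap P (prod.snd : A ⨯ A ⟶ A) α}

/-- Comprehensive diagonals: `f = g` iff `⊤ = P⟨f,g⟩(δ)`. -/
def ComprehensiveDiagonals (hE : IsElementary P) : Prop :=
  ∀ {X A : C} (f g : X ⟶ A), f = g ↔ rmap P (prod.lift f g) (hE.δ A) = ⊤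

/-- (Weak) comprehension structure. -/
structure Comprehension where
  cObj : ∀ {A : C}, Fib P A → C
  cArr : ∀ {A : C} (α : Fib P A), cObj α ⟶ A
  cTop : ∀ {A : C} (α : Fib P A), rmap P (cArr α) α = ⊤
  cUniv : ∀ {A : C} (α : Fib P A) {Y : C} (f : Y ⟶ A),
    rmap P f α = ⊤ → ∃ k : Y ⟶ cObj α, k ≫ cArr α = f

/-- Full comprehension. -/
def Comprehension.Full (hC : Comprehension P) : Prop :=
  ∀ {A : C} (α β : Fib P A), α ≤ β ↔ rmap P (hC.cArr α) β = ⊤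

/-- Strong comprehension: comprehension arrows are monic. -/
def Comprehension.Strong (hC : Comprehension P) : Prop :=
  ∀ {A : C} (α : Fib P A), Mono (hC.cArr α)

/-- `P`-injective arrow. -/
def PInj (hE : IsElementary P) {X A : C} (f : X ⟶ A) : Prop :=
  rmap P (prod.map f f) (hE.δ A) = hE.δ X

/-- `P`-surjective arrow. -/
def PSurj (hEx : IsExistential P) {X A : C} (f : X ⟶ A) : Prop :=
  hEx.E f (⊤ : Fib P X) = ⊤

/-- The product relation `ρ ⊠ σ` on `(A ⨯ B) ⨯ (A ⨯ B)`. -/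
def boxprod {A B : C} (ρ : Fib P (A ⨯ A)) (σ : Fib P (B ⨯ B)) :
    Fib P ((A ⨯ B) ⨯ (A ⨯ B)) :=
  rmap P (prod.map prod.fst prod.fst) ρ ⊓ rmap P (prod.map prod.snd prod.snd) σ

/-- The hom condition of the elementary quotient completion: `f : A ⟶ B`
represents an arrow `(A,ρ) ⟶ (B,σ)` iff `ρ ≤ P(f×f)(σ)`. -/
def QHomC {A B : C} (ρ : Fib P (A ⨯ A)) (σ : Fib P (B ⨯ B)) (f : A ⟶ B) : Prop :=
  ρ ≤ rmap P (prod.map f f) σ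

/-- The equivalence on representatives: `f ∼ g` iff `⊤ = P⟨f,g⟩(σ)`. -/
def QEq {A B : C} (σ : Fib P (B ⨯ B)) (f g : A ⟶ B) : Prop :=
  rmap P (prod.lift f g) σ = ⊤

/-! The comprehension arrow `c = {α}` of `P` also serves in `Q(P)`. Its kernel relation
`P(c×c)(ρ)` is again an equivalence relation: symmetry and transitivity are reindexed from `ρ`,
and reflexivity holds because a relation `θ` with `P(Δ)(θ) = ⊤` contains `δ` (elementarity),
while comprehensive diagonals give `P(Δ)(P(c×c)(ρ)) = P⟨c,c⟩(ρ) ≥ P⟨c,c⟩(δ) = ⊤`.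
Moreover an arrow `k` into `(X, P(c×c)(ρ))` satisfies the `Q(P)` conditions exactly when
`k ≫ c` does into `(A, ρ)`, so factorization and fullness come from `P`, and `[c]` is monic
because `u ∼ v` modulo `P(c×c)(ρ)` means by definition `u ≫ c ∼ v ≫ c` modulo `ρ`. -/

section Reindexing

omit [HasFiniteProducts C]

lemma rmap_comp {A B D : C} (f : A ⟶ B) (g : B ⟶ D) (x : Fib P D) :
    rmap P (f ≫ g) x = rmap P f (rmap P g x) := by
  simp [rmap, op_comp, P.map_comp]

lemma rmap_id {A : C} (x : Fib P A) : rmap P (𝟙 A) x = x := by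
  simp [rmap, P.map_id]

lemma rmap_top {A B : C} (f : A ⟶ B) : rmap P f (⊤ : Fib P B) = ⊤ :=
  (P.map f.op).map_top'

lemma rmap_inf {A B : C} (f : A ⟶ B) (x y : Fib P B) :
    rmap P f (x ⊓ y) = rmap P f x ⊓ rmap P f y :=
  (P.map f.op).map_inf' x y

lemma rmap_mono {A B : C} (f : A ⟶ B) {x y : Fib P B} (h : x ≤ y) :
    rmap P f x ≤ rmap P f y := by
  rw [← inf_eq_left.mpr h, rmap_inf]
  exact inf_le_right

lemma rmap_comp_of_eq {A B B' D : C} {f : A ⟶ B} {g : B ⟶ D} {f' : A ⟶ B'} {g' : B' ⟶ D}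
    (h : f ≫ g = f' ≫ g') (x : Fib P D) :
    rmap P f (rmap P g x) = rmap P f' (rmap P g' x) := by
  rw [← rmap_comp, h, rmap_comp]

end Reindexing

attribute [local simp] prod.lift_fst prod.lift_fst_assoc prod.lift_snd prod.lift_snd_assoc

namespace IsElementary

variable {P}

lemma subst (hE : IsElementary P) {X A : C} (θ : Fib P (X ⨯ A)) :
    rmap P (prod.fst : (X ⨯ A) ⨯ A ⟶ X ⨯ A) θ ⊓
      rmap P (prod.lift (prod.fst ≫ prod.snd) prod.snd : (X ⨯ A) ⨯ A ⟶ A ⨯ A) (hE.δ A) ≤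
    rmap P (prod.lift (prod.fst ≫ prod.fst) prod.snd : (X ⨯ A) ⨯ A ⟶ X ⨯ A) θ := by
  refine (hE.adj X A θ _).mpr ?_
  rw [← rmap_comp, show (prod.lift (𝟙 (X ⨯ A)) prod.snd ≫
      prod.lift (prod.fst ≫ prod.fst) prod.snd : X ⨯ A ⟶ X ⨯ A) = 𝟙 _ by ext <;> simp, rmap_id]

lemma delta_le_of_rmap_diag_eq_top (hE : IsElementary P) {X : C} {θ : Fib P (X ⨯ X)}
    (hθ : rmap P (diag X) θ = ⊤) : hE.δ X ≤ θ := by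
  let t : X ⨯ X ⟶ (X ⨯ X) ⨯ X := prod.lift (prod.lift prod.fst prod.fst) prod.snd
  have h := rmap_mono P t (hE.subst θ)
  rw [rmap_inf, ← rmap_comp, ← rmap_comp, ← rmap_comp,
    show t ≫ prod.fst = prod.fst ≫ diag X by ext <;> simp [t],
    show t ≫ prod.lift (prod.fst ≫ prod.snd) prod.snd = 𝟙 _ by ext <;> simp [t],
    show t ≫ prod.lift (prod.fst ≫ prod.fst) prod.snd = 𝟙 _ by ext <;> simp [t],
    rmap_comp, hθ, rmap_top, rmap_id, rmap_id, top_inf_eq] at h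
  exact h

end IsElementary

section ComprehensiveDiagonals

variable {P} {hE : IsElementary P} (hcd : ComprehensiveDiagonals P hE)
include hcd

lemma qEq_refl {A Y : C} {ρ : Fib P (A ⨯ A)} (hρ : hE.δ A ≤ ρ) (f : Y ⟶ A) : QEq P ρ f f :=
  top_le_iff.mp <| (hcd f f).mp rfl ▸ rmap_mono P (prod.lift f f) hρ

lemma delta_le_rmap_prodMap {A X : C} {ρ : Fib P (A ⨯ A)} (hρ : hE.δ A ≤ ρ) (c : X ⟶ A) :
    hE.δ X ≤ rmap P (prod.map c c) ρ := by
  refine hE.delta_le_of_rmap_diag_eq_top ?_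
  rw [← rmap_comp, show diag X ≫ prod.map c c = prod.lift c c by simp]
  exact qEq_refl hcd hρ c

lemma IsEqRel.rmap_prodMap {A X : C} {ρ : Fib P (A ⨯ A)} (hρ : IsEqRel P hE ρ) (c : X ⟶ A) :
    IsEqRel P hE (rmap P (prod.map c c) ρ) where
  refl := delta_le_rmap_prodMap hcd hρ.refl c
  symm := by
    rw [rmap_comp_of_eq P (show prod.lift prod.snd prod.fst ≫ prod.map c c =
      prod.map c c ≫ prod.lift prod.snd prod.fst by ext <;> simp), ← hρ.symm]
  trans := by
    have h := rmap_mono P (prod.map (prod.map c c) c) hρ.trans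
    rwa [rmap_inf,
      rmap_comp_of_eq P (show prod.map (prod.map c c) c ≫ prod.fst = prod.fst ≫ prod.map c c by
        simp),
      rmap_comp_of_eq P (show prod.map (prod.map c c) c ≫ prod.lift (prod.fst ≫ prod.snd) prod.snd
        = prod.lift (prod.fst ≫ prod.snd) prod.snd ≫ prod.map c c by ext <;> simp),
      rmap_comp_of_eq P (show prod.map (prod.map c c) c ≫ prod.lift (prod.fst ≫ prod.fst) prod.snd
        = prod.lift (prod.fst ≫ prod.fst) prod.snd ≫ prod.map c c by ext <;> simp)] at h

end ComprehensiveDiagonals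

section KernelRelation

variable {P} {A X Y : C} (ρ : Fib P (A ⨯ A)) (c : X ⟶ A)

lemma qHomC_rmap_prodMap_iff (τ : Fib P (Y ⨯ Y)) (k : Y ⟶ X) :
    QHomC P τ (rmap P (prod.map c c) ρ) k ↔ QHomC P τ ρ (k ≫ c) := by
  rw [QHomC, QHomC, ← rmap_comp, prod.map_map]

lemma qEq_rmap_prodMap_iff (u v : Y ⟶ X) :
    QEq P (rmap P (prod.map c c) ρ) u v ↔ QEq P ρ (u ≫ c) (v ≫ c) := by
  rw [QEq, QEq, ← rmap_comp, prod.lift_map]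

end KernelRelation

theorem quotient_completion_full_strong_comprehension
    (hE : IsElementary P) (hC : Comprehension P)
    (hfull : hC.Full P) (hcd : ComprehensiveDiagonals P hE)
    {A : C} (ρ : Fib P (A ⨯ A)) (hρ : IsEqRel P hE ρ)
    (α : Fib P A) :
    IsEqRel P hE (rmap P (prod.map (hC.cArr α) (hC.cArr α)) ρ) ∧
    QHomC P (rmap P (prod.map (hC.cArr α) (hC.cArr α)) ρ) ρ (hC.cArr α) ∧
    rmap P (hC.cArr α) α = ⊤ ∧
    (∀ {Y : C} (τ : Fib P (Y ⨯ Y)), IsEqRel P hE τ →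
      ∀ f : Y ⟶ A, QHomC P τ ρ f → rmap P f α = ⊤ →
        ∃ k : Y ⟶ hC.cObj α,
          QHomC P τ (rmap P (prod.map (hC.cArr α) (hC.cArr α)) ρ) k ∧
          QEq P ρ (k ≫ hC.cArr α) f) ∧
    (∀ {Z : C} (ζ : Fib P (Z ⨯ Z)), IsEqRel P hE ζ →
      ∀ u v : Z ⟶ hC.cObj α,
        QHomC P ζ (rmap P (prod.map (hC.cArr α) (hC.cArr α)) ρ) u →
        QHomC P ζ (rmap P (prod.map (hC.cArr α) (hC.cArr α)) ρ) v →
        QEq P ρ (u ≫ hC.cArr α) (v ≫ hC.cArr α) →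
        QEq P (rmap P (prod.map (hC.cArr α) (hC.cArr α)) ρ) u v) ∧
    (∀ β : Fib P A, β ∈ Des P ρ → (α ≤ β ↔ rmap P (hC.cArr α) β = ⊤)) := by
  refine ⟨hρ.rmap_prodMap hcd _, le_rfl, hC.cTop α, ?_, ?_, fun β _ => hfull α β⟩
  · intro Y τ _ f hf hfα
    obtain ⟨k, hk⟩ := hC.cUniv α f hfα
    refine ⟨k, (qHomC_rmap_prodMap_iff ρ _ τ k).mpr (hk ▸ hf), ?_⟩
    rw [hk]
    exact qEq_refl hcd hρ.refl f
  · intro Z ζ _ u v _ _ huv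
    exact (qEq_rmap_prodMap_iff ρ _ u v).mpr huv

end DoctrinePaper
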